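/- arXiv:math/0304073 — 2 statements merged into one kernel-verified Lean document; each statement's English description precedes it below -/
import Mathlib

section
/- Let F be a field of characteristic zero, Γ an additive subgroup of F^{2ℓ}, and for p ∈ {1,...,ℓ} let σ_p = ε_p + ε_{p+ℓ} (sum of standard coordinate vectors), with σ_p ∈ Γ. On the group algebra F[Γ] with basis {x^α : α ∈ Γ}, define [x^α, x^β] = Σ_{p=1}^{ℓ} (α_p β_{p+ℓ} − α_{p+ℓ} β_p) x^{σ_p + α + β}, extended bilinearly. Then this bracket is skew-symmetric and satisfies the Jacobi identity, so F[Γ] is a Lie algebra. -/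
def idx1 {ℓ : ℕ} (p : Fin ℓ) : Fin (2 * ℓ) := ⟨p.1, by have := p.isLt; omega⟩

def idx2 {ℓ : ℕ} (p : Fin ℓ) : Fin (2 * ℓ) := ⟨p.1 + ℓ, by have := p.isLt; omega⟩

/-- The standard coordinate vector `ε_q` in `F^{2ℓ}`. -/
def eps {ℓ : ℕ} (F : Type*) [Field F] (q : Fin (2 * ℓ)) : Fin (2 * ℓ) → F :=
  fun r => if r = q then 1 else 0

/-- `σ_p = ε_p + ε_{p+ℓ}`. -/
def sigmaVec {ℓ : ℕ} (F : Type*) [Field F] (p : Fin ℓ) : Fin (2 * ℓ) → F :=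
  eps F (idx1 p) + eps F (idx2 p)

/-- The Hamiltonian bracket on the group algebra `F[Γ]` (with basis `x^α`, `α ∈ Γ`,
realized as `Γ →₀ F`):
`[x^α, x^β] = ∑_p (α_p β_{p+ℓ} − α_{p+ℓ} β_p) x^{σ_p + α + β}`, extended bilinearly. -/
noncomputable def hamBr {ℓ : ℕ} {F : Type*} [Field F]
    (Γ : AddSubgroup (Fin (2 * ℓ) → F)) (hσ : ∀ p : Fin ℓ, sigmaVec F p ∈ Γ)
    (f g : Γ →₀ F) : Γ →₀ F :=
  Finsupp.sum f fun α a => Finsupp.sum g fun β b => ∑ p : Fin ℓ,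
    Finsupp.single ((⟨sigmaVec F p, hσ p⟩ : Γ) + α + β)
      (a * b * ((α : Fin (2 * ℓ) → F) (idx1 p) * (β : Fin (2 * ℓ) → F) (idx2 p)
        - (α : Fin (2 * ℓ) → F) (idx2 p) * (β : Fin (2 * ℓ) → F) (idx1 p)))

section Aux
variable {ℓ : ℕ} {F : Type*} [Field F] {Γ : AddSubgroup (Fin (2 * ℓ) → F)}

lemma sigma_idx1 (p q : Fin ℓ) : sigmaVec F p (idx1 q) = if p = q then 1 else 0 := by
  simp only [sigmaVec, eps, Pi.add_apply]
  have h2 : idx1 q ≠ idx2 p := by simp [Fin.ext_iff, idx1, idx2]; omega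
  rw [if_neg h2, add_zero]
  have : idx1 q = idx1 p ↔ p = q := by
    constructor
    · intro h; simp [Fin.ext_iff, idx1] at h; exact Fin.ext h.symm
    · rintro rfl; rfl
  by_cases h : p = q
  · rw [if_pos (this.mpr h), if_pos h]
  · rw [if_neg (fun hh => h (this.mp hh)), if_neg h]

lemma sigma_idx2 (p q : Fin ℓ) : sigmaVec F p (idx2 q) = if p = q then 1 else 0 := by
  simp only [sigmaVec, eps, Pi.add_apply]
  have h2 : idx2 q ≠ idx1 p := by simp [Fin.ext_iff, idx1, idx2]; have := p.isLt; omega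
  rw [if_neg h2, zero_add]
  have : idx2 q = idx2 p ↔ p = q := by
    constructor
    · intro h; simp [Fin.ext_iff, idx2] at h; exact Fin.ext h.symm
    · rintro rfl; rfl
  by_cases h : p = q
  · rw [if_pos (this.mpr h), if_pos h]
  · rw [if_neg (fun hh => h (this.mp hh)), if_neg h]

/-- The structure constant `c_p(α,β)`. -/
def cf (p : Fin ℓ) (α β : Γ) : F :=
  (α : Fin (2 * ℓ) → F) (idx1 p) * (β : Fin (2 * ℓ) → F) (idx2 p)
    - (α : Fin (2 * ℓ) → F) (idx2 p) * (β : Fin (2 * ℓ) → F) (idx1 p)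

variable (hσ : ∀ p : Fin ℓ, sigmaVec F p ∈ Γ)

lemma cf_sigma_add_add (p q : Fin ℓ) (X Y Z : Γ) :
    cf q ((⟨sigmaVec F p, hσ p⟩ : Γ) + X + Y) Z =
      cf q X Z + cf q Y Z +
        (if p = q then (Z : Fin (2 * ℓ) → F) (idx2 q) - (Z : Fin (2 * ℓ) → F) (idx1 q) else 0) := by
  simp only [cf, AddSubgroup.coe_add, Pi.add_apply, sigma_idx1, sigma_idx2]
  by_cases h : p = q
  · simp only [if_pos h]; ring
  · simp only [if_neg h]; ring

lemma key_coeff (p q : Fin ℓ) (α β γ : Γ) (a b c : F) :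
    ((a * b * cf p α β) * c * cf q ((⟨sigmaVec F p, hσ p⟩ : Γ) + α + β) γ
      + (b * c * cf p β γ) * a * cf q ((⟨sigmaVec F p, hσ p⟩ : Γ) + β + γ) α
      + (c * a * cf p γ α) * b * cf q ((⟨sigmaVec F p, hσ p⟩ : Γ) + γ + α) β)
    + ((a * b * cf q α β) * c * cf p ((⟨sigmaVec F q, hσ q⟩ : Γ) + α + β) γ
      + (b * c * cf q β γ) * a * cf p ((⟨sigmaVec F q, hσ q⟩ : Γ) + β + γ) α
      + (c * a * cf q γ α) * b * cf p ((⟨sigmaVec F q, hσ q⟩ : Γ) + γ + α) β) = 0 := by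
  simp only [cf_sigma_add_add]
  by_cases h : p = q
  · subst h
    simp only [if_pos rfl, if_true, eq_self_iff_true, cf]
    ring
  · simp only [if_neg h, if_neg (Ne.symm h), cf]
    ring

lemma hamBr_def (f g : Γ →₀ F) : hamBr Γ hσ f g =
    Finsupp.sum f fun α a => Finsupp.sum g fun β b => ∑ p : Fin ℓ,
      Finsupp.single ((⟨sigmaVec F p, hσ p⟩ : Γ) + α + β) (a * b * cf p α β) := rfl

lemma hamBr_single_single (α β : Γ) (a b : F) :
    hamBr Γ hσ (Finsupp.single α a) (Finsupp.single β b) =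
      ∑ p : Fin ℓ, Finsupp.single ((⟨sigmaVec F p, hσ p⟩ : Γ) + α + β) (a * b * cf p α β) := by
  rw [hamBr_def, Finsupp.sum_single_index, Finsupp.sum_single_index]
  · simp
  · simp

lemma hamBr_zero_left (g : Γ →₀ F) : hamBr Γ hσ 0 g = 0 := by
  rw [hamBr_def, Finsupp.sum_zero_index]

lemma hamBr_zero_right (f : Γ →₀ F) : hamBr Γ hσ f 0 = 0 := by
  rw [hamBr_def]
  simp [Finsupp.sum_zero_index, Finsupp.sum]

lemma hamBr_add_left (f f' g : Γ →₀ F) :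
    hamBr Γ hσ (f + f') g = hamBr Γ hσ f g + hamBr Γ hσ f' g := by
  classical
  rw [hamBr_def, hamBr_def, hamBr_def, Finsupp.sum_add_index]
  · intro α _; simp
  · intro α _ a a'
    rw [← Finsupp.sum_add]
    apply Finsupp.sum_congr
    intro β _
    rw [← Finset.sum_add_distrib]
    apply Finset.sum_congr rfl
    intro p _
    rw [← Finsupp.single_add]
    congr 1
    ring

lemma hamBr_add_right (f g g' : Γ →₀ F) :
    hamBr Γ hσ f (g + g') = hamBr Γ hσ f g + hamBr Γ hσ f g' := by
  classical
  rw [hamBr_def, hamBr_def, hamBr_def, ← Finsupp.sum_add]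
  apply Finsupp.sum_congr
  intro α _
  rw [Finsupp.sum_add_index]
  · intro β _; simp
  · intro β _ b b'
    rw [← Finset.sum_add_distrib]
    apply Finset.sum_congr rfl
    intro p _
    rw [← Finsupp.single_add]
    congr 1
    ring

lemma hamBr_sum_left {ι : Type*} (s : Finset ι) (u : ι → (Γ →₀ F)) (g : Γ →₀ F) :
    hamBr Γ hσ (∑ i ∈ s, u i) g = ∑ i ∈ s, hamBr Γ hσ (u i) g := by
  classical
  induction s using Finset.induction_on with
  | empty => simp [hamBr_zero_left]
  | insert i s' h ih =>
    rw [Finset.sum_insert h, Finset.sum_insert h, hamBr_add_left, ih]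

lemma hamBr_skew_single (α β : Γ) (a b : F) :
    hamBr Γ hσ (Finsupp.single α a) (Finsupp.single β b)
      = - hamBr Γ hσ (Finsupp.single β b) (Finsupp.single α a) := by
  rw [hamBr_single_single, hamBr_single_single, ← Finset.sum_neg_distrib]
  apply Finset.sum_congr rfl
  intro p _
  rw [← Finsupp.single_neg]
  congr 1
  · abel
  · simp only [cf]; ring

lemma hamBr_jacobi_single [CharZero F] (α β γ : Γ) (a b c : F) :
    hamBr Γ hσ (hamBr Γ hσ (Finsupp.single α a) (Finsupp.single β b)) (Finsupp.single γ c)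
      + hamBr Γ hσ (hamBr Γ hσ (Finsupp.single β b) (Finsupp.single γ c)) (Finsupp.single α a)
      + hamBr Γ hσ (hamBr Γ hσ (Finsupp.single γ c) (Finsupp.single α a)) (Finsupp.single β b)
      = 0 := by
  classical
  set T : Fin ℓ → Fin ℓ → Γ := fun p q =>
    (⟨sigmaVec F p, hσ p⟩ : Γ) + (⟨sigmaVec F q, hσ q⟩ : Γ) + α + β + γ with hT
  set V : Fin ℓ → Fin ℓ → F := fun p q =>
    (a * b * cf p α β) * c * cf q ((⟨sigmaVec F p, hσ p⟩ : Γ) + α + β) γ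
      + (b * c * cf p β γ) * a * cf q ((⟨sigmaVec F p, hσ p⟩ : Γ) + β + γ) α
      + (c * a * cf p γ α) * b * cf q ((⟨sigmaVec F p, hσ p⟩ : Γ) + γ + α) β with hV
  have e1 : hamBr Γ hσ (hamBr Γ hσ (Finsupp.single α a) (Finsupp.single β b)) (Finsupp.single γ c)
      = ∑ p : Fin ℓ, ∑ q : Fin ℓ, Finsupp.single (T p q)
          ((a * b * cf p α β) * c * cf q ((⟨sigmaVec F p, hσ p⟩ : Γ) + α + β) γ) := by
    rw [hamBr_single_single, hamBr_sum_left]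
    refine Finset.sum_congr rfl fun p _ => ?_
    rw [hamBr_single_single]
    refine Finset.sum_congr rfl fun q _ => ?_
    congr 1
    simp only [hT]; abel
  have e2 : hamBr Γ hσ (hamBr Γ hσ (Finsupp.single β b) (Finsupp.single γ c)) (Finsupp.single α a)
      = ∑ p : Fin ℓ, ∑ q : Fin ℓ, Finsupp.single (T p q)
          ((b * c * cf p β γ) * a * cf q ((⟨sigmaVec F p, hσ p⟩ : Γ) + β + γ) α) := by
    rw [hamBr_single_single, hamBr_sum_left]
    refine Finset.sum_congr rfl fun p _ => ?_
    rw [hamBr_single_single]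
    refine Finset.sum_congr rfl fun q _ => ?_
    congr 1
    simp only [hT]; abel
  have e3 : hamBr Γ hσ (hamBr Γ hσ (Finsupp.single γ c) (Finsupp.single α a)) (Finsupp.single β b)
      = ∑ p : Fin ℓ, ∑ q : Fin ℓ, Finsupp.single (T p q)
          ((c * a * cf p γ α) * b * cf q ((⟨sigmaVec F p, hσ p⟩ : Γ) + γ + α) β) := by
    rw [hamBr_single_single, hamBr_sum_left]
    refine Finset.sum_congr rfl fun p _ => ?_
    rw [hamBr_single_single]
    refine Finset.sum_congr rfl fun q _ => ?_
    congr 1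
    simp only [hT]; abel
  have eS : hamBr Γ hσ (hamBr Γ hσ (Finsupp.single α a) (Finsupp.single β b)) (Finsupp.single γ c)
      + hamBr Γ hσ (hamBr Γ hσ (Finsupp.single β b) (Finsupp.single γ c)) (Finsupp.single α a)
      + hamBr Γ hσ (hamBr Γ hσ (Finsupp.single γ c) (Finsupp.single α a)) (Finsupp.single β b)
      = ∑ p : Fin ℓ, ∑ q : Fin ℓ, Finsupp.single (T p q) (V p q) := by
    rw [e1, e2, e3, ← Finset.sum_add_distrib, ← Finset.sum_add_distrib]
    refine Finset.sum_congr rfl fun p _ => ?_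
    rw [← Finset.sum_add_distrib, ← Finset.sum_add_distrib]
    refine Finset.sum_congr rfl fun q _ => ?_
    rw [← Finsupp.single_add, ← Finsupp.single_add]
  rw [eS]
  set S : Γ →₀ F := ∑ p : Fin ℓ, ∑ q : Fin ℓ, Finsupp.single (T p q) (V p q) with hS
  have hTsymm : ∀ p q, T p q = T q p := by
    intro p q; simp only [hT]; abel
  have hVanti : ∀ p q, V q p = - V p q := by
    intro p q
    exact eq_neg_of_add_eq_zero_right (key_coeff hσ p q α β γ a b c)
  have hneg : S = -S := by
    calc S = ∑ q : Fin ℓ, ∑ p : Fin ℓ, Finsupp.single (T p q) (V p q) := Finset.sum_comm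
    _ = ∑ p : Fin ℓ, ∑ q : Fin ℓ, Finsupp.single (T q p) (V q p) := rfl
    _ = ∑ p : Fin ℓ, ∑ q : Fin ℓ, - Finsupp.single (T p q) (V p q) := by
        refine Finset.sum_congr rfl fun p _ => Finset.sum_congr rfl fun q _ => ?_
        rw [hTsymm p q, hVanti p q, Finsupp.single_neg]
    _ = -S := by
        rw [hS]
        simp [Finset.sum_neg_distrib]
  have h2 : S + S = 0 := by
    nth_rewrite 2 [hneg]
    exact add_neg_cancel S
  have h2' : (2 : F) • S = 0 := by rw [two_smul]; exact h2
  rcases smul_eq_zero.mp h2' with h | h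
  · exact absurd h two_ne_zero
  · exact h
end Aux

/-- The Hamiltonian bracket on `F[Γ]` is skew-symmetric and satisfies the Jacobi
identity, so `F[Γ]` is a Lie algebra. -/
theorem hamBr_skew_jacobi (ℓ : ℕ) (F : Type*) [Field F] [CharZero F]
    (Γ : AddSubgroup (Fin (2 * ℓ) → F)) (hσ : ∀ p : Fin ℓ, sigmaVec F p ∈ Γ) :
    (∀ f g : Γ →₀ F, hamBr Γ hσ f g = - hamBr Γ hσ g f) ∧
    (∀ f g h : Γ →₀ F,
      hamBr Γ hσ (hamBr Γ hσ f g) h + hamBr Γ hσ (hamBr Γ hσ g h) f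
        + hamBr Γ hσ (hamBr Γ hσ h f) g = 0) := by
  constructor
  · intro f g
    induction f using Finsupp.induction_linear with
    | zero => rw [hamBr_zero_left, hamBr_zero_right, neg_zero]
    | add f1 f2 h1 h2 => rw [hamBr_add_left, hamBr_add_right, h1, h2, neg_add]
    | single α a =>
      induction g using Finsupp.induction_linear with
      | zero => rw [hamBr_zero_left, hamBr_zero_right, neg_zero]
      | add g1 g2 h1 h2 => rw [hamBr_add_right, hamBr_add_left, h1, h2, neg_add]
      | single β b => exact hamBr_skew_single hσ α β a b
  · intro f g h
    induction f using Finsupp.induction_linear with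
    | zero => simp [hamBr_zero_left, hamBr_zero_right]
    | add f1 f2 h1 h2 =>
      calc hamBr Γ hσ (hamBr Γ hσ (f1 + f2) g) h + hamBr Γ hσ (hamBr Γ hσ g h) (f1 + f2)
            + hamBr Γ hσ (hamBr Γ hσ h (f1 + f2)) g
          = (hamBr Γ hσ (hamBr Γ hσ f1 g) h + hamBr Γ hσ (hamBr Γ hσ g h) f1
              + hamBr Γ hσ (hamBr Γ hσ h f1) g)
            + (hamBr Γ hσ (hamBr Γ hσ f2 g) h + hamBr Γ hσ (hamBr Γ hσ g h) f2
              + hamBr Γ hσ (hamBr Γ hσ h f2) g) := by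
            simp only [hamBr_add_left, hamBr_add_right]; abel
        _ = 0 := by rw [h1, h2, add_zero]
    | single α a =>
      induction g using Finsupp.induction_linear with
      | zero => simp [hamBr_zero_left, hamBr_zero_right]
      | add g1 g2 h1 h2 =>
        calc hamBr Γ hσ (hamBr Γ hσ (Finsupp.single α a) (g1 + g2)) h
              + hamBr Γ hσ (hamBr Γ hσ (g1 + g2) h) (Finsupp.single α a)
              + hamBr Γ hσ (hamBr Γ hσ h (Finsupp.single α a)) (g1 + g2)
            = (hamBr Γ hσ (hamBr Γ hσ (Finsupp.single α a) g1) h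
                + hamBr Γ hσ (hamBr Γ hσ g1 h) (Finsupp.single α a)
                + hamBr Γ hσ (hamBr Γ hσ h (Finsupp.single α a)) g1)
              + (hamBr Γ hσ (hamBr Γ hσ (Finsupp.single α a) g2) h
                + hamBr Γ hσ (hamBr Γ hσ g2 h) (Finsupp.single α a)
                + hamBr Γ hσ (hamBr Γ hσ h (Finsupp.single α a)) g2) := by
              simp only [hamBr_add_left, hamBr_add_right]; abel
          _ = 0 := by rw [h1, h2, add_zero]
      | single β b =>
        induction h using Finsupp.induction_linear with
        | zero => simp [hamBr_zero_left, hamBr_zero_right]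
        | add k1 k2 h1 h2 =>
          calc hamBr Γ hσ (hamBr Γ hσ (Finsupp.single α a) (Finsupp.single β b)) (k1 + k2)
                + hamBr Γ hσ (hamBr Γ hσ (Finsupp.single β b) (k1 + k2)) (Finsupp.single α a)
                + hamBr Γ hσ (hamBr Γ hσ (k1 + k2) (Finsupp.single α a)) (Finsupp.single β b)
              = (hamBr Γ hσ (hamBr Γ hσ (Finsupp.single α a) (Finsupp.single β b)) k1
                  + hamBr Γ hσ (hamBr Γ hσ (Finsupp.single β b) k1) (Finsupp.single α a)
                  + hamBr Γ hσ (hamBr Γ hσ k1 (Finsupp.single α a)) (Finsupp.single β b))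
                + (hamBr Γ hσ (hamBr Γ hσ (Finsupp.single α a) (Finsupp.single β b)) k2
                  + hamBr Γ hσ (hamBr Γ hσ (Finsupp.single β b) k2) (Finsupp.single α a)
                  + hamBr Γ hσ (hamBr Γ hσ k2 (Finsupp.single α a)) (Finsupp.single β b)) := by
                simp only [hamBr_add_left, hamBr_add_right]; abel
            _ = 0 := by rw [h1, h2, add_zero]
        | single γ c => exact hamBr_jacobi_single hσ α β γ a b c
end

section
/- Let F be a field of characteristic zero. Suppose c : ℤ → F satisfies c_0 = c_1 = c_{-1} = 0 and (i − 2j) c_i = (i + j) c_{i−j} − (2i − j) c_j for all i, j ∈ ℤ. Then there exists a constant c ∈ F such that c_i = (i³ − i)·c for all i ∈ ℤ. -/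
/-- If `c : ℤ → F` satisfies `c₀ = c₁ = c₋₁ = 0` and the recurrence
`(i − 2j) cᵢ = (i + j) c_{i−j} − (2i − j) cⱼ` for all `i, j ∈ ℤ`, then
`cᵢ = (i³ − i)·c` for some constant `c ∈ F`. -/
theorem recurrence_cubic (F : Type*) [Field F] [CharZero F] (c : ℤ → F)
    (h0 : c 0 = 0) (h1 : c 1 = 0) (hm1 : c (-1) = 0)
    (hrec : ∀ i j : ℤ,
      ((i : F) - 2 * (j : F)) * c i
        = ((i : F) + (j : F)) * c (i - j) - (2 * (i : F) - (j : F)) * c j) :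
    ∃ k : F, ∀ i : ℤ, c i = ((i : F) ^ 3 - (i : F)) * k := by
  set k := c 2 / 6 with hk
  have h2 : c 2 = 6 * k := by rw [hk]; field_simp
  have hm2 : c (-2) = -6 * k := by
    have h := hrec 2 (-2)
    norm_num at h
    rw [h2] at h
    linear_combination h / 6
  have hup : ∀ i : ℤ, ((i : F) - 2) * c i = ((i : F) + 1) * c (i - 1) := by
    intro i
    have h := hrec i 1
    rw [h1] at h
    push_cast at h
    linear_combination h
  have hdown : ∀ i : ℤ, ((i : F) + 2) * c i = ((i : F) - 1) * c (i + 1) := by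
    intro i
    have h := hrec i (-1)
    rw [hm1] at h
    push_cast at h
    have harg : i - -1 = i + 1 := by ring
    rw [harg] at h
    linear_combination h
  refine ⟨k, ?_⟩
  have key : ∀ n : ℕ, c (n : ℤ) = (((n : ℤ) : F) ^ 3 - ((n : ℤ) : F)) * k ∧
      c (-(n : ℤ)) = (((-(n : ℤ)) : F) ^ 3 - ((-(n : ℤ)) : F)) * k := by
    intro n
    induction n using Nat.strong_induction_on with
    | _ n ih =>
      rcases n with _ | (_ | (_ | m))
      · norm_num [h0]
      · norm_num [h1, hm1]
      · constructor
        · push_cast; rw [h2]; ring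
        · push_cast; rw [hm2]; ring
      · obtain ⟨ihp, ihm⟩ := ih (m + 2) (by omega)
        have hne : ((m : F) + 1) ≠ 0 := by
          have : ((m + 1 : ℕ) : F) ≠ 0 := Nat.cast_ne_zero.mpr (by omega)
          push_cast at this
          exact this
        constructor
        · have hu := hup ((m : ℤ) + 3)
          rw [show ((m : ℤ) + 3 - 1) = ((m + 2 : ℕ) : ℤ) by push_cast; ring] at hu
          rw [ihp] at hu
          push_cast at hu ⊢
          rw [show ((m : ℤ) + 1 + 1 + 1) = (m : ℤ) + 3 by ring]
          apply mul_left_cancel₀ hne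
          linear_combination hu
        · have hd := hdown (-((m : ℤ) + 3))
          rw [show (-((m : ℤ) + 3) + 1) = -((m + 2 : ℕ) : ℤ) by push_cast; ring] at hd
          rw [ihm] at hd
          push_cast at hd ⊢
          rw [show (-((m : ℤ) + 1 + 1 + 1)) = -((m : ℤ) + 3) by ring]
          apply mul_left_cancel₀ hne
          linear_combination -hd
  intro i
  rcases i with n | n
  · simpa using (key n).1
  · have := (key (n + 1)).2
    rw [show (-((n + 1 : ℕ) : ℤ)) = Int.negSucc n by simp [Int.negSucc_eq]] at this
    rw [this]
    push_cast [Int.negSucc_eq]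
    ring
end
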